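/- Let G and G' be graphs and let p be a map from V(G) ∪ V(G') to ℝ^d such that (G,p) and (G',p) are infinitesimally rigid frameworks in ℝ^d and such that V(G) ∩ V(G') contains d points whose images under p are affinely independent. Then (G ∪ G', p) is infinitesimally rigid in ℝ^d. -/

import Mathlib

/-!
The trivial infinitesimal motions of a framework in `ℝ^d` are the restrictions of the
infinitesimal isometries `x ↦ S x + w` with `S` skew-adjoint. They are always motions, and when
the points affinely span `ℝ^d` the parametrisation by `(S, w)` is injective, so they form a space
of dimension `C(d, 2) + d = C(d + 1, 2)`: infinitesimal rigidity means that every motion is trivial.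
A motion of the union is therefore given by some `(S, w)` on one piece and `(S', w')` on the other.
These agree at `d` affinely independent points, so `S - S'` is a skew map vanishing on a subspace of
codimension at most one; such a map is zero (its image of the orthogonal line lies in that line and
is orthogonal to it), hence `(S, w) = (S', w')` and the motion is trivial on the whole union.
-/

open scoped Classical RealInnerProductSpace

/-- The space of infinitesimal motions of the framework given by the graph `G` restricted
to the vertex set `s`, with embedding `p`. -/
noncomputable def motionSpaceOn {V : Type} [Fintype V] {d : ℕ}
    (G : SimpleGraph V) (p : V → EuclideanSpace ℝ (Fin d)) (s : Set V) :
    Submodule ℝ (s → EuclideanSpace ℝ (Fin d)) where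
  carrier := {m | ∀ u v : s, G.Adj u v → ⟪m u - m v, p u - p v⟫ = 0}
  add_mem' := by
    intro x y hx hy u v h
    have hx' := hx u v h
    have hy' := hy u v h
    have : (x + y) u - (x + y) v = (x u - x v) + (y u - y v) := by
      simp [Pi.add_apply]; abel
    rw [this, inner_add_left, hx', hy', add_zero]
  zero_mem' := by intro u v h; simp
  smul_mem' := by
    intro c x hx u v h
    have hx' := hx u v h
    have : (c • x) u - (c • x) v = c • (x u - x v) := by
      simp [Pi.smul_apply, smul_sub]
    rw [this, real_inner_smul_left, hx', mul_zero]

/-- The framework `(G, p)` on the vertex set `s` is infinitesimally rigid in `ℝ^d`: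
its points affinely span `ℝ^d` and its motion space has the minimal possible dimension
`C(d+1,2)`. -/
noncomputable def IsInfRigidOn {V : Type} [Fintype V] {d : ℕ}
    (G : SimpleGraph V) (p : V → EuclideanSpace ℝ (Fin d)) (s : Set V) : Prop :=
  affineSpan ℝ (p '' s) = ⊤ ∧
  Module.finrank ℝ (motionSpaceOn G p s) = (d + 1).choose 2

open Module
open scoped Matrix

section SkewAdjoint

variable {E : Type*} [NormedAddCommGroup E] [InnerProductSpace ℝ E] [CompleteSpace E]
  {S : E →L[ℝ] E}

lemma inner_apply_left_of_mem_skewAdjoint (hS : S ∈ skewAdjoint (E →L[ℝ] E)) (x y : E) :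
    ⟪S x, y⟫ = -⟪x, S y⟫ := by
  rw [← ContinuousLinearMap.adjoint_inner_right, ← ContinuousLinearMap.star_eq_adjoint,
    skewAdjoint.mem_iff.1 hS, neg_apply, inner_neg_right]

lemma inner_apply_self_of_mem_skewAdjoint (hS : S ∈ skewAdjoint (E →L[ℝ] E)) (x : E) :
    ⟪S x, x⟫ = 0 := by
  have h := inner_apply_left_of_mem_skewAdjoint hS x x
  rw [real_inner_comm (S x)] at h
  linarith

lemma eq_zero_of_mem_skewAdjoint_of_le_ker [FiniteDimensional ℝ E]
    (hS : S ∈ skewAdjoint (E →L[ℝ] E)) {U : Submodule ℝ E}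
    (hU : U ≤ LinearMap.ker (S : E →ₗ[ℝ] E)) (hdim : finrank ℝ E ≤ finrank ℝ U + 1) :
    S = 0 := by
  have hperp : Uᗮ ≤ LinearMap.ker (S : E →ₗ[ℝ] E) := by
    intro x hx
    have hSx : S x ∈ Uᗮ := fun u hu => by
      have hSu : S u = 0 := hU hu
      rw [← neg_eq_zero, ← inner_apply_left_of_mem_skewAdjoint hS, hSu, inner_zero_left]
    rcases eq_or_ne x 0 with rfl | hx0
    · exact Submodule.zero_mem _
    -- `Uᗮ` is at most a line, hence the line through `x`, and `S x` is orthogonal to `x`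
    have hline : (ℝ ∙ x) = Uᗮ := by
      refine Submodule.eq_of_le_of_finrank_le ((Submodule.span_singleton_le_iff_mem _ _).2 hx) ?_
      have := Submodule.finrank_add_finrank_orthogonal U
      rw [finrank_span_singleton hx0]
      omega
    have hSx' : S x ∈ (ℝ ∙ x)ᗮ := Submodule.mem_orthogonal_singleton_iff_inner_right.2 <| by
      rw [real_inner_comm, inner_apply_self_of_mem_skewAdjoint hS]
    exact (Submodule.mem_bot ℝ).1
      ((Submodule.inf_orthogonal_eq_bot (ℝ ∙ x)).le ⟨hline ▸ hSx, hSx'⟩)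
  have htop := sup_le hU hperp
  rw [Submodule.sup_orthogonal_of_hasOrthogonalProjection, top_le_iff, LinearMap.ker_eq_top] at htop
  exact ContinuousLinearMap.coe_injective htop

end SkewAdjoint

section SkewMatrix

variable {n : Type*} [Fintype n] [LinearOrder n]

def Matrix.strictUpperOfFun (f : {x : n × n // x.1 < x.2} → ℝ) : Matrix n n ℝ :=
  fun i j => if h : i < j then f ⟨(i, j), h⟩ else 0

def skewAdjointMatrixEquiv :
    skewAdjoint (Matrix n n ℝ) ≃ₗ[ℝ] ({x : n × n // x.1 < x.2} → ℝ) where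
  toFun A x := (A : Matrix n n ℝ) x.1.1 x.1.2
  map_add' _ _ := rfl
  map_smul' _ _ := rfl
  invFun f := ⟨Matrix.strictUpperOfFun f - (Matrix.strictUpperOfFun f)ᵀ, by
    rw [skewAdjoint.mem_iff, Matrix.star_eq_conjTranspose,
      Matrix.conjTranspose_eq_transpose_of_trivial, Matrix.transpose_sub,
      Matrix.transpose_transpose, neg_sub]⟩
  left_inv A := by
    have hA : ∀ i j, (A : Matrix n n ℝ) j i = -(A : Matrix n n ℝ) i j := fun i j => by
      simpa [Matrix.star_eq_conjTranspose] using congrFun₂ (skewAdjoint.star_val_eq (x := A)) i j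
    ext i j
    simp only [Matrix.strictUpperOfFun, Matrix.sub_apply, Matrix.transpose_apply]
    rcases lt_trichotomy i j with h | rfl | h
    · simp [h, not_lt_of_gt h]
    · have := hA i i; simp; linarith
    · simp [h, not_lt_of_gt h, hA j i]
  right_inv f := by
    ext ⟨⟨i, j⟩, h⟩
    simp [Matrix.strictUpperOfFun, h, not_lt_of_gt h]

lemma finrank_skewAdjoint_matrix :
    finrank ℝ (skewAdjoint (Matrix n n ℝ)) = (Fintype.card n).choose 2 := by
  rw [skewAdjointMatrixEquiv.finrank_eq, finrank_fintype_fun_eq_card, Fintype.card_subtype,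
    Fintype.card_product_filter_lt]

end SkewMatrix

lemma StarAlgEquiv.finrank_skewAdjoint_eq {R A B : Type*} [CommSemiring R] [StarRing R]
    [TrivialStar R] [Ring A] [Algebra R A] [StarRing A] [StarModule R A]
    [Ring B] [Algebra R B] [StarRing B] [StarModule R B] (e : A ≃⋆ₐ[R] B) :
    finrank R (skewAdjoint A) = finrank R (skewAdjoint B) :=
  LinearEquiv.finrank_eq
    { toFun x := ⟨e x.1,
        skewAdjoint.mem_iff.2 (by rw [← map_star, skewAdjoint.star_val_eq, map_neg])⟩
      invFun y := ⟨e.symm y.1,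
        skewAdjoint.mem_iff.2 (by rw [← map_star, skewAdjoint.star_val_eq, map_neg])⟩
      map_add' x y := Subtype.ext (map_add e x.1 y.1)
      map_smul' r x := Subtype.ext (map_smul e r x.1)
      left_inv x := Subtype.ext (e.symm_apply_apply x.1)
      right_inv y := Subtype.ext (e.apply_symm_apply y.1) }

instance {E : Type*} [NormedAddCommGroup E] [InnerProductSpace ℝ E] [FiniteDimensional ℝ E] :
    Module.Finite ℝ (skewAdjoint (E →L[ℝ] E)) :=
  inferInstanceAs (Module.Finite ℝ (skewAdjoint.submodule ℝ (E →L[ℝ] E)))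

lemma finrank_skewAdjoint_continuousLinearMap {E : Type*} [NormedAddCommGroup E]
    [InnerProductSpace ℝ E] [FiniteDimensional ℝ E] :
    finrank ℝ (skewAdjoint (E →L[ℝ] E)) = (finrank ℝ E).choose 2 := by
  let e := Matrix.toEuclideanCLM.trans (stdOrthonormalBasis ℝ E).repr.symm.conjStarAlgEquiv
  rw [← e.finrank_skewAdjoint_eq, finrank_skewAdjoint_matrix, Fintype.card_fin]

section TrivialMotion

variable {E : Type*} [NormedAddCommGroup E] [InnerProductSpace ℝ E] [CompleteSpace E]
  {ι : Type*}

def trivialMotion (q : ι → E) : skewAdjoint (E →L[ℝ] E) × E →ₗ[ℝ] (ι → E) where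
  toFun x i := (x.1 : E →L[ℝ] E) (q i) + x.2
  map_add' x y := by
    ext i
    simp only [Prod.fst_add, Prod.snd_add, AddMemClass.coe_add, add_apply, Pi.add_apply]
    abel
  map_smul' c x := by
    ext i
    simp [smul_add]

@[simp]
lemma trivialMotion_apply (q : ι → E) (x : skewAdjoint (E →L[ℝ] E) × E) (i : ι) :
    trivialMotion q x i = (x.1 : E →L[ℝ] E) (q i) + x.2 :=
  rfl

lemma trivialMotion_fst_eq_zero [FiniteDimensional ℝ E] {q : ι → E}
    {x : skewAdjoint (E →L[ℝ] E) × E} (hx : trivialMotion q x = 0)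
    (hdim : finrank ℝ E ≤ finrank ℝ (vectorSpan ℝ (Set.range q)) + 1) : x.1 = 0 := by
  obtain ⟨⟨S, hS⟩, w⟩ := x
  have hker : vectorSpan ℝ (Set.range q) ≤ LinearMap.ker (S : E →ₗ[ℝ] E) := by
    rw [vectorSpan_def, Submodule.span_le]
    rintro _ ⟨_, ⟨i, rfl⟩, _, ⟨j, rfl⟩, rfl⟩
    have hi := congrFun hx i
    have hj := congrFun hx j
    simp only [trivialMotion_apply, Pi.zero_apply] at hi hj
    simp only [SetLike.mem_coe, LinearMap.mem_ker, ContinuousLinearMap.coe_coe, vsub_eq_sub,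
      map_sub]
    rw [eq_neg_of_add_eq_zero_left hi, eq_neg_of_add_eq_zero_left hj, sub_self]
  exact Subtype.ext (eq_zero_of_mem_skewAdjoint_of_le_ker hS hker hdim)

lemma trivialMotion_injective_of_finrank_le [FiniteDimensional ℝ E] [Nonempty ι] {q : ι → E}
    (hdim : finrank ℝ E ≤ finrank ℝ (vectorSpan ℝ (Set.range q)) + 1) :
    Function.Injective (trivialMotion q) := by
  rw [← LinearMap.ker_eq_bot, LinearMap.ker_eq_bot']
  intro x hx
  have h1 := trivialMotion_fst_eq_zero hx hdim
  obtain ⟨i⟩ := ‹Nonempty ι›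
  have h2 : x.2 = 0 := by simpa [h1] using congrFun hx i
  exact Prod.ext h1 h2

lemma trivialMotion_injective_of_affineSpan_eq_top [FiniteDimensional ℝ E] {q : ι → E}
    (hq : affineSpan ℝ (Set.range q) = ⊤) : Function.Injective (trivialMotion q) := by
  have : Nonempty ι :=
    Set.range_nonempty_iff_nonempty.1 (AffineSubspace.nonempty_of_affineSpan_eq_top ℝ E E hq)
  refine trivialMotion_injective_of_finrank_le ?_
  rw [AffineSubspace.vectorSpan_eq_top_of_affineSpan_eq_top ℝ E E hq, finrank_top]
  exact Nat.le_succ _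

lemma trivialMotion_injective_of_affineIndependent [FiniteDimensional ℝ E] [Fintype ι]
    {q : ι → E} (hq : AffineIndependent ℝ q) (hcard : finrank ℝ E ≤ Fintype.card ι) :
    Function.Injective (trivialMotion q) := by
  cases isEmpty_or_nonempty ι
  · have : Subsingleton E := finrank_zero_iff.1 (by simpa using hcard)
    exact Function.injective_of_subsingleton _
  · exact trivialMotion_injective_of_finrank_le (hq.finrank_vectorSpan_add_one ▸ hcard)

lemma finrank_range_trivialMotion [FiniteDimensional ℝ E] {q : ι → E}
    (hq : Function.Injective (trivialMotion q)) :
    finrank ℝ (LinearMap.range (trivialMotion q)) = (finrank ℝ E + 1).choose 2 := by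
  rw [LinearMap.finrank_range_of_inj hq, finrank_prod, finrank_skewAdjoint_continuousLinearMap,
    Nat.choose_succ_succ', Nat.choose_one_right, add_comm]

end TrivialMotion

section Framework

variable {V : Type} [Fintype V] {d : ℕ}

lemma range_trivialMotion_le_motionSpaceOn (G : SimpleGraph V)
    (p : V → EuclideanSpace ℝ (Fin d)) (s : Set V) :
    LinearMap.range (trivialMotion fun v : s => p v) ≤ motionSpaceOn G p s := by
  rintro _ ⟨⟨⟨S, hS⟩, w⟩, rfl⟩ _ _ -
  simp only [trivialMotion_apply, add_sub_add_right_eq_sub, ← map_sub]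
  exact inner_apply_self_of_mem_skewAdjoint hS _

lemma comp_inclusion_mem_motionSpaceOn {G H : SimpleGraph V} {p : V → EuclideanSpace ℝ (Fin d)}
    {s t : Set V} (hGH : G ≤ H) (hst : s ⊆ t) {m : t → EuclideanSpace ℝ (Fin d)}
    (hm : m ∈ motionSpaceOn H p t) : m ∘ Set.inclusion hst ∈ motionSpaceOn G p s :=
  fun _ _ huv => hm _ _ (hGH huv)

lemma isInfRigidOn_iff {G : SimpleGraph V} {p : V → EuclideanSpace ℝ (Fin d)} {s : Set V} :
    IsInfRigidOn G p s ↔ affineSpan ℝ (p '' s) = ⊤ ∧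
      motionSpaceOn G p s ≤ LinearMap.range (trivialMotion fun v : s => p v) := by
  refine and_congr_right fun hspan => ?_
  have hle := range_trivialMotion_le_motionSpaceOn G p s
  have hfin :
      finrank ℝ (LinearMap.range (trivialMotion fun v : s => p v)) = (d + 1).choose 2 := by
    rw [Set.image_eq_range] at hspan
    rw [finrank_range_trivialMotion (trivialMotion_injective_of_affineSpan_eq_top hspan),
      finrank_euclideanSpace_fin]
  constructor
  · intro h
    exact (Submodule.eq_of_le_of_finrank_eq hle (hfin.trans h.symm)).ge
  · intro h
    rw [le_antisymm h hle, hfin]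

end Framework

theorem stmt16_general {V : Type} [Fintype V] {d : ℕ}
    (G G' : SimpleGraph V) (p : V → EuclideanSpace ℝ (Fin d)) (A B : Set V)
    (hA : IsInfRigidOn G p A) (hB : IsInfRigidOn G' p B)
    (t : Fin d → V) (ht : ∀ i, t i ∈ A ∩ B)
    (hind : AffineIndependent ℝ (fun i => p (t i))) :
    IsInfRigidOn (G ⊔ G') p (A ∪ B) := by
  rw [isInfRigidOn_iff] at hA hB ⊢
  refine ⟨top_unique (hA.1 ▸ affineSpan_mono ℝ (Set.image_mono Set.subset_union_left)),
    fun m hm => ?_⟩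
  obtain ⟨x, hx⟩ :=
    hA.2 (comp_inclusion_mem_motionSpaceOn le_sup_left Set.subset_union_left hm)
  obtain ⟨y, hy⟩ :=
    hB.2 (comp_inclusion_mem_motionSpaceOn le_sup_right Set.subset_union_right hm)
  have hxy : x = y := by
    refine trivialMotion_injective_of_affineIndependent hind (by simp) (funext fun i => ?_)
    exact (congrFun hx ⟨t i, (ht i).1⟩).trans (congrFun hy ⟨t i, (ht i).2⟩).symm
  refine ⟨x, funext fun ⟨v, hv⟩ => ?_⟩
  rcases hv with hv | hv
  · exact congrFun hx ⟨v, hv⟩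
  · exact hxy ▸ congrFun hy ⟨v, hv⟩

/-- Gluing Lemma: if `(G,p)` with vertex set `A` and `(G',p)` with vertex
set `B` are infinitesimally rigid in `ℝ^d` and `A ∩ B` contains `d` points whose images
under `p` are affinely independent, then `(G ∪ G', p)` on `A ∪ B` is infinitesimally
rigid. -/
theorem stmt16 {V : Type} [Fintype V] {d : ℕ}
    (G G' : SimpleGraph V) (p : V → EuclideanSpace ℝ (Fin d)) (A B : Set V)
    (hGA : ∀ u v : V, G.Adj u v → u ∈ A ∧ v ∈ A)
    (hGB : ∀ u v : V, G'.Adj u v → u ∈ B ∧ v ∈ B)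
    (hA : IsInfRigidOn G p A) (hB : IsInfRigidOn G' p B)
    (t : Fin d → V) (ht : ∀ i, t i ∈ A ∩ B)
    (hind : AffineIndependent ℝ (fun i => p (t i))) :
    IsInfRigidOn (G ⊔ G') p (A ∪ B) :=
  stmt16_general G G' p A B hA hB t ht hind
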